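/- arXiv:0806.2222 — 4 statements merged into one kernel-verified Lean document; each statement's English description precedes it below -/
import Mathlib

section
/- Fix integers n ≥ 2 and k ≥ 0, and let μ be the uniform probability measure on the set of sequences (i_1, …, i_k) ∈ {1,…,n−1}^k. Then the pushforward of μ under the map (i_1,…,i_k) ↦ id·S_{i_1}·⋯·S_{i_k} equals the pushforward of μ under the map (i_1,…,i_k) ↦ (id·S_{i_1}·⋯·S_{i_k})^{−1}; in other words, the state of the discrete-time variable-speed oriented swap process after k steps is equal in law to its inverse permutation. (Theorem 1.3, discrete-time version) -/
/-- The sorting operator `S_i`, acting on the right of a permutation of `Fin n`.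
Positions are 1-based: for `1 ≤ i ≤ n-1`, the positions `i` and `i+1` correspond to
the `Fin n` indices `i-1` and `i`.  `σ·S_i := σ * τ_i` (where `(σ * τ)(x) = σ(τ(x))`)
if the values of `σ` at positions `i`, `i+1` are in increasing order, and `σ·S_i := σ`
otherwise. -/
def sortOp (n : ℕ) (i : ℕ) (σ : Equiv.Perm (Fin n)) : Equiv.Perm (Fin n) :=
  if h : 1 ≤ i ∧ i < n then
    let p : Fin n := ⟨i - 1, lt_of_le_of_lt (Nat.sub_le i 1) h.2⟩
    let q : Fin n := ⟨i, h.2⟩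
    if σ p < σ q then σ * Equiv.swap p q else σ
  else σ

/-- The left analogue of `sortOp`: conditionally swap the values `i-1` and `i`. -/
def leftOp (n : ℕ) (i : ℕ) (σ : Equiv.Perm (Fin n)) : Equiv.Perm (Fin n) :=
  if h : 1 ≤ i ∧ i < n then
    let p : Fin n := ⟨i - 1, lt_of_le_of_lt (Nat.sub_le i 1) h.2⟩
    let q : Fin n := ⟨i, h.2⟩
    if σ⁻¹ p < σ⁻¹ q then Equiv.swap p q * σ else σ
  else σ

lemma inv_sortOp (n i : ℕ) (σ : Equiv.Perm (Fin n)) :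
    (sortOp n i σ)⁻¹ = leftOp n i σ⁻¹ := by
  unfold sortOp leftOp
  by_cases h : 1 ≤ i ∧ i < n
  · simp only [dif_pos h, inv_inv]
    split_ifs with hc <;> simp [mul_inv_rev]
  · simp [dif_neg h]

/-- Swapping two adjacent values preserves strict order comparisons, except
between the two values themselves. -/
lemma swap_adj_lt {n : ℕ} (p q a b : Fin n) (hpq : (q : ℕ) = (p : ℕ) + 1)
    (hab : a ≠ b) (h1 : ¬(a = p ∧ b = q)) (h2 : ¬(a = q ∧ b = p)) :
    Equiv.swap p q a < Equiv.swap p q b ↔ a < b := by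
  have hpq' : p ≠ q := by intro h; rw [h] at hpq; omega
  by_cases hap : a = p
  · subst hap
    have hbq : b ≠ q := fun h => h1 ⟨rfl, h⟩
    rw [Equiv.swap_apply_left, Equiv.swap_apply_of_ne_of_ne (Ne.symm hab) hbq]
    have : (b : ℕ) ≠ (a : ℕ) := fun h => hab (Fin.ext h.symm)
    have : (b : ℕ) ≠ (q : ℕ) := fun h => hbq (Fin.ext h)
    simp only [Fin.lt_def]; omega
  · by_cases haq : a = q
    · subst haq
      have hbp : b ≠ p := fun h => h2 ⟨rfl, h⟩
      rw [Equiv.swap_apply_right, Equiv.swap_apply_of_ne_of_ne hbp (Ne.symm hab)]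
      have : (b : ℕ) ≠ (a : ℕ) := fun h => hab (Fin.ext h.symm)
      have : (b : ℕ) ≠ (p : ℕ) := fun h => hbp (Fin.ext h)
      simp only [Fin.lt_def]; omega
    · rw [Equiv.swap_apply_of_ne_of_ne hap haq]
      by_cases hbp : b = p
      · subst hbp
        rw [Equiv.swap_apply_left]
        have : (a : ℕ) ≠ (b : ℕ) := fun h => hab (Fin.ext h)
        have : (a : ℕ) ≠ (q : ℕ) := fun h => haq (Fin.ext h)
        simp only [Fin.lt_def]; omega
      · by_cases hbq : b = q
        · subst hbq
          rw [Equiv.swap_apply_right]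
          have : (a : ℕ) ≠ (b : ℕ) := fun h => hab (Fin.ext h)
          have : (a : ℕ) ≠ (p : ℕ) := fun h => hap (Fin.ext h)
          simp only [Fin.lt_def]; omega
        · rw [Equiv.swap_apply_of_ne_of_ne hbp hbq]

lemma leftOp_sortOp_comm (n i j : ℕ) (σ : Equiv.Perm (Fin n)) :
    leftOp n i (sortOp n j σ) = sortOp n j (leftOp n i σ) := by
  by_cases hj : 1 ≤ j ∧ j < n
  · by_cases hi : 1 ≤ i ∧ i < n
    · set p : Fin n := ⟨i - 1, lt_of_le_of_lt (Nat.sub_le i 1) hi.2⟩ with hp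
      set q : Fin n := ⟨i, hi.2⟩ with hq
      set r : Fin n := ⟨j - 1, lt_of_le_of_lt (Nat.sub_le j 1) hj.2⟩ with hr
      set s : Fin n := ⟨j, hj.2⟩ with hs
      have hpq : (q : ℕ) = (p : ℕ) + 1 := by simp [hp, hq]; omega
      have hrs : (s : ℕ) = (r : ℕ) + 1 := by simp [hr, hs]; omega
      have hpqne : p ≠ q := fun h => by rw [h] at hpq; omega
      have hrsne : r ≠ s := fun h => by rw [h] at hrs; omega
      have hplq : p < q := by simp only [Fin.lt_def]; omega
      have hrls : r < s := by simp only [Fin.lt_def]; omega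
      have sort_def : sortOp n j σ = if σ r < σ s then σ * Equiv.swap r s else σ := by
        unfold sortOp; rw [dif_pos hj]
      have sort_def' : ∀ τ : Equiv.Perm (Fin n),
          sortOp n j τ = if τ r < τ s then τ * Equiv.swap r s else τ := by
        intro τ; unfold sortOp; rw [dif_pos hj]
      have left_def : ∀ τ : Equiv.Perm (Fin n),
          leftOp n i τ = if τ⁻¹ p < τ⁻¹ q then Equiv.swap p q * τ else τ := by
        intro τ; unfold leftOp; rw [dif_pos hi]
      by_cases hX : σ r = p ∧ σ s = q
      · -- case X : both ops fire, results agree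
        obtain ⟨hX1, hX2⟩ := hX
        have hA : σ r < σ s := by rw [hX1, hX2]; exact hplq
        have hinvp : σ⁻¹ p = r := by rw [← hX1]; simp
        have hinvq : σ⁻¹ q = s := by rw [← hX2]; simp
        have key : σ * Equiv.swap r s = Equiv.swap p q * σ := by
          ext x
          simp only [Equiv.Perm.mul_apply]
          rcases eq_or_ne x r with rfl | hxr
          · rw [Equiv.swap_apply_left, hX2, hX1, Equiv.swap_apply_left]
          · rcases eq_or_ne x s with rfl | hxs
            · rw [Equiv.swap_apply_right, hX1, hX2, Equiv.swap_apply_right]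
            · rw [Equiv.swap_apply_of_ne_of_ne hxr hxs,
                Equiv.swap_apply_of_ne_of_ne
                  (fun h => hxr (by rw [← hinvp, ← h]; simp))
                  (fun h => hxs (by rw [← hinvq, ← h]; simp))]
        have hB2 : ¬ ((σ * Equiv.swap r s)⁻¹ p < (σ * Equiv.swap r s)⁻¹ q) := by
          simp only [mul_inv_rev, Equiv.Perm.mul_apply, Equiv.swap_inv, hinvp, hinvq,
            Equiv.swap_apply_left, Equiv.swap_apply_right, not_lt]
          exact le_of_lt hrls
        have hBs : σ⁻¹ p < σ⁻¹ q := by rw [hinvp, hinvq]; exact hrls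
        have hA2 : ¬ ((Equiv.swap p q * σ) r < (Equiv.swap p q * σ) s) := by
          simp only [Equiv.Perm.mul_apply, hX1, hX2, Equiv.swap_apply_left,
            Equiv.swap_apply_right, not_lt]
          exact le_of_lt hplq
        rw [sort_def, if_pos hA, left_def, if_neg hB2, left_def, if_pos hBs,
          sort_def', if_neg hA2]
        exact key
      · by_cases hY : σ r = q ∧ σ s = p
        · -- case Y : neither op fires
          obtain ⟨hY1, hY2⟩ := hY
          have hA : ¬ σ r < σ s := by rw [hY1, hY2]; exact not_lt.mpr (le_of_lt hplq)
          have hinvp : σ⁻¹ p = s := by rw [← hY2]; simp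
          have hinvq : σ⁻¹ q = r := by rw [← hY1]; simp
          have hB : ¬ σ⁻¹ p < σ⁻¹ q := by
            rw [hinvp, hinvq]; exact not_lt.mpr (le_of_lt hrls)
          rw [sort_def, if_neg hA, left_def, if_neg hB, sort_def, if_neg hA]
        · -- case Z : conditions are independent
          have hane : σ r ≠ σ s := fun h => hrsne (σ.injective h)
          have hine : σ⁻¹ p ≠ σ⁻¹ q := fun h => hpqne (σ⁻¹.injective h)
          have hX' : ¬(σ⁻¹ p = r ∧ σ⁻¹ q = s) := by
            rintro ⟨h1, h2⟩
            exact hX ⟨by rw [← h1]; simp, by rw [← h2]; simp⟩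
          have hY' : ¬(σ⁻¹ p = s ∧ σ⁻¹ q = r) := by
            rintro ⟨h1, h2⟩
            exact hY ⟨by rw [← h2]; simp, by rw [← h1]; simp⟩
          -- condition for sortOp is unchanged by leftOp, and vice versa
          have cond1 : ∀ τ, τ = Equiv.swap p q * σ →
              (τ r < τ s ↔ σ r < σ s) := by
            rintro τ rfl
            simp only [Equiv.Perm.mul_apply]
            exact swap_adj_lt p q (σ r) (σ s) hpq hane hX hY
          have cond2 : ∀ τ, τ = σ * Equiv.swap r s →
              (τ⁻¹ p < τ⁻¹ q ↔ σ⁻¹ p < σ⁻¹ q) := by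
            rintro τ rfl
            simp only [mul_inv_rev, Equiv.Perm.mul_apply, Equiv.swap_inv]
            exact swap_adj_lt r s (σ⁻¹ p) (σ⁻¹ q) hrs hine hX' hY'
          by_cases hA : σ r < σ s <;> by_cases hB : σ⁻¹ p < σ⁻¹ q
          · rw [sort_def, if_pos hA, left_def, if_pos ((cond2 _ rfl).mpr hB),
              left_def, if_pos hB, sort_def', if_pos ((cond1 _ rfl).mpr hA), mul_assoc]
          · rw [sort_def, if_pos hA, left_def,
              if_neg (fun h => hB ((cond2 _ rfl).mp h)), left_def, if_neg hB,
              sort_def, if_pos hA]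
          · rw [sort_def, if_neg hA, left_def, if_pos hB, sort_def',
              if_neg (fun h => hA ((cond1 _ rfl).mp h))]
          · rw [sort_def, if_neg hA, left_def, if_neg hB, sort_def, if_neg hA]
    · have hli : ∀ τ : Equiv.Perm (Fin n), leftOp n i τ = τ := by
        intro τ; unfold leftOp; rw [dif_neg hi]
      rw [hli, hli]
  · have hsj : ∀ τ : Equiv.Perm (Fin n), sortOp n j τ = τ := by
      intro τ; unfold sortOp; rw [dif_neg hj]
    rw [hsj, hsj]

lemma leftOp_one (n i : ℕ) : leftOp n i 1 = sortOp n i 1 := by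
  unfold leftOp sortOp
  by_cases h : 1 ≤ i ∧ i < n
  · simp only [dif_pos h, inv_one, one_mul, mul_one]
  · simp [dif_neg h]

lemma foldl_inv (n : ℕ) (l : List ℕ) (σ : Equiv.Perm (Fin n)) :
    (l.foldl (fun σ i => sortOp n i σ) σ)⁻¹ = l.foldl (fun σ i => leftOp n i σ) σ⁻¹ := by
  induction l generalizing σ with
  | nil => simp
  | cons i l ih => simp only [List.foldl_cons, ih, inv_sortOp]

lemma foldl_leftOp_sortOp (n i : ℕ) (l : List ℕ) (σ : Equiv.Perm (Fin n)) :
    l.foldl (fun σ j => leftOp n j σ) (sortOp n i σ)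
      = sortOp n i (l.foldl (fun σ j => leftOp n j σ) σ) := by
  induction l generalizing σ with
  | nil => simp
  | cons j l ih => simp only [List.foldl_cons, leftOp_sortOp_comm, ih]

lemma foldl_leftOp_eq_reverse (n : ℕ) (l : List ℕ) :
    l.foldl (fun σ i => leftOp n i σ) 1
      = l.reverse.foldl (fun σ i => sortOp n i σ) 1 := by
  induction l with
  | nil => simp
  | cons i l ih =>
    rw [List.foldl_cons, List.reverse_cons, List.foldl_append, List.foldl_cons,
      List.foldl_nil, leftOp_one, foldl_leftOp_sortOp, ih]

lemma foldl_sortOp_inv (n : ℕ) (l : List ℕ) :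
    (l.foldl (fun σ i => sortOp n i σ) 1)⁻¹
      = l.reverse.foldl (fun σ i => sortOp n i σ) 1 := by
  rw [foldl_inv, inv_one, foldl_leftOp_eq_reverse]

/-- The state of the discrete-time variable-speed oriented swap process after `k` steps,
driven by a sequence of swap locations: a sequence `seq : Fin k → Fin (n-1)` encodes
the locations `i_j := seq j + 1 ∈ {1, …, n-1}`, and we apply `S_{i_1}, …, S_{i_k}` to
the identity permutation in this order. -/
def oswapState (n k : ℕ) (seq : Fin k → Fin (n - 1)) : Equiv.Perm (Fin n) :=
  (List.ofFn fun j => ((seq j : ℕ) + 1)).foldl (fun σ i => sortOp n i σ) 1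

lemma ofFn_rev' {α : Type*} {k : ℕ} (f : Fin k → α) :
    (List.ofFn f).reverse = List.ofFn (fun j => f (Fin.rev j)) := by
  apply List.ext_getElem
  · simp
  · intro i h1 h2
    simp only [List.getElem_reverse, List.getElem_ofFn, List.length_ofFn] at *
    congr 1
    ext
    simp [Fin.rev]
    omega

lemma oswapState_inv (n k : ℕ) (seq : Fin k → Fin (n - 1)) :
    (oswapState n k seq)⁻¹ = oswapState n k (fun j => seq (Fin.rev j)) := by
  rw [oswapState, foldl_sortOp_inv, ofFn_rev']
  rfl

lemma map_equiv_uniform {α : Type*} [Fintype α] [Nonempty α] [DecidableEq α] (e : α ≃ α) :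
    PMF.map e (PMF.uniformOfFintype α) = PMF.uniformOfFintype α := by
  ext b
  rw [PMF.map_apply, PMF.uniformOfFintype_apply]
  rw [tsum_eq_single (e.symm b) (fun a ha => by
    rw [if_neg]; intro h; exact ha (by rw [h, Equiv.symm_apply_apply]))]
  rw [if_pos (by rw [Equiv.apply_symm_apply]), PMF.uniformOfFintype_apply]

/-- Theorem 1.3 (discrete-time version): under the uniform measure on sequences
`(i_1, …, i_k) ∈ {1,…,n-1}^k`, the permutation `id·S_{i_1}·⋯·S_{i_k}` is equal in law
to its inverse. -/
theorem oriented_swap_symmetry_discrete (n k : ℕ) (hn : 2 ≤ n) :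
    letI : Nonempty (Fin (n - 1)) := ⟨⟨0, by omega⟩⟩
    PMF.map (fun seq => oswapState n k seq)
        (PMF.uniformOfFintype (Fin k → Fin (n - 1)))
      = PMF.map (fun seq => (oswapState n k seq)⁻¹)
          (PMF.uniformOfFintype (Fin k → Fin (n - 1))) := by
  haveI : Nonempty (Fin (n - 1)) := ⟨⟨0, by omega⟩⟩
  have hrev : (fun seq : Fin k → Fin (n - 1) => (oswapState n k seq)⁻¹)
      = (fun seq => oswapState n k seq) ∘
        (fun seq : Fin k → Fin (n - 1) => fun j => seq (Fin.rev j)) := by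
    funext seq
    exact oswapState_inv n k seq
  let e : (Fin k → Fin (n - 1)) ≃ (Fin k → Fin (n - 1)) :=
    Equiv.arrowCongr (Fin.revPerm) (Equiv.refl _)
  have he : (fun seq : Fin k → Fin (n - 1) => fun j => seq (Fin.rev j)) = ⇑e := by
    funext seq
    rfl
  rw [hrev, he, ← PMF.map_comp, map_equiv_uniform]
end

section
/- Let n ∈ ℤ, k ≥ 0, and let m be an integer with m ≥ n. Then for every configuration ρ ∈ Ω₀ one has B_n R_k J_m ρ = B_n R_k ρ. (Lemma 3.2(ii)) -/
open Set

/-- `Ω₀`: a configuration `ρ : ℤ → Bool` is admissible when its support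
`{x : ℤ | ρ x = true}` is bounded above. -/
def BddSupport (ρ : ℤ → Bool) : Prop := BddAbove {x : ℤ | ρ x = true}

/-- The queue-length `S(ρ, x)`: the number of particles of `ρ` strictly to the right
of `x`. -/
noncomputable def qS (ρ : ℤ → Bool) (x : ℤ) : ℕ :=
  {y : ℤ | x < y ∧ ρ y = true}.ncard

/-- The cut-off operator `R_k`: keeps only the `k` rightmost particles. -/
noncomputable def Rk (k : ℕ) (ρ : ℤ → Bool) : ℤ → Bool :=
  fun x => if qS ρ x < k then ρ x else false

/-- The push-back operator `B_n`: pushes all particles back into `(-∞, n]`,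
preserving the exclusion. -/
noncomputable def Bn (n : ℤ) (ρ : ℤ → Bool) : ℤ → Bool :=
  fun x =>
    if n < x then false
    else if n - x < (qS ρ x : ℤ) then true
    else ρ x

/-- The jump operator `J_m`: exchanges the values of `ρ` at `m` and `m+1` if
`ρ(m) = 1` and `ρ(m+1) = 0`, and leaves `ρ` unchanged otherwise. -/
def Jm (m : ℤ) (ρ : ℤ → Bool) : ℤ → Bool :=
  fun x =>
    if ρ m = true ∧ ρ (m + 1) = false then
      if x = m then ρ (m + 1) else if x = m + 1 then ρ m else ρ x
    else ρ x

/-! ### Auxiliary lemmas -/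

lemma qS_finite {ρ : ℤ → Bool} (hρ : BddSupport ρ) (x : ℤ) :
    {y : ℤ | x < y ∧ ρ y = true}.Finite := by
  obtain ⟨b, hb⟩ := hρ
  apply (Set.finite_Icc (x + 1) b).subset
  rintro y ⟨h1, h2⟩
  exact ⟨by omega, hb h2⟩

lemma Jm_eq_self {ρ : ℤ → Bool} {m : ℤ} (h : ¬(ρ m = true ∧ ρ (m + 1) = false)) :
    Jm m ρ = ρ := by
  funext x; simp [Jm, h]

lemma Jm_apply_ne {ρ : ℤ → Bool} {m y : ℤ} (h1 : y ≠ m) (h2 : y ≠ m + 1) :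
    Jm m ρ y = ρ y := by
  simp [Jm, h1, h2]

lemma Jm_eq_swap {ρ : ℤ → Bool} {m : ℤ} (h : ρ m = true ∧ ρ (m + 1) = false) :
    Jm m ρ = fun x => ρ (Equiv.swap m (m + 1) x) := by
  funext x
  simp only [Jm, if_pos h, Equiv.swap_apply_def]
  split_ifs <;> rfl

lemma qS_Jm_of_ne {ρ : ℤ → Bool} {m : ℤ} (x : ℤ) (hx : x ≠ m) :
    qS (Jm m ρ) x = qS ρ x := by
  by_cases h : ρ m = true ∧ ρ (m + 1) = false
  · rcases lt_or_gt_of_ne hx with hlt | hgt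
    · -- x < m : use the swap bijection
      rw [Jm_eq_swap h]
      unfold qS
      have hs : ∀ y : ℤ, x < y ↔ x < Equiv.swap m (m + 1) y := by
        intro y
        rw [Equiv.swap_apply_def]
        split_ifs with h1 h2 <;> omega
      have himg : {y : ℤ | x < y ∧ ρ (Equiv.swap m (m + 1) y) = true}
          = (Equiv.swap m (m + 1)) '' {y : ℤ | x < y ∧ ρ y = true} := by
        ext y
        simp only [Set.mem_image, Set.mem_setOf_eq]
        constructor
        · rintro ⟨h1, h2⟩
          exact ⟨Equiv.swap m (m + 1) y, ⟨(hs y).mp h1, h2⟩, Equiv.swap_apply_self _ _ _⟩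
        · rintro ⟨z, ⟨h1, h2⟩, rfl⟩
          rw [Equiv.swap_apply_self]
          exact ⟨(hs z).mp h1, h2⟩
      rw [himg, Set.ncard_image_of_injective _ (Equiv.swap m (m + 1)).injective]
    · -- x > m : all relevant sites are ≥ m + 2
      unfold qS
      congr 1
      ext y
      simp only [Set.mem_setOf_eq]
      constructor
      · rintro ⟨h1, h2⟩
        exact ⟨h1, by rwa [Jm_apply_ne (by omega) (by omega)] at h2⟩
      · rintro ⟨h1, h2⟩
        exact ⟨h1, by rwa [Jm_apply_ne (by omega) (by omega)]⟩
  · rw [Jm_eq_self h]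

lemma qS_Jm_self {ρ : ℤ → Bool} {m : ℤ} (hρ : BddSupport ρ)
    (h : ρ m = true ∧ ρ (m + 1) = false) :
    qS (Jm m ρ) m = qS ρ m + 1 := by
  have hne : (m + 1 : ℤ) ≠ m := by omega
  have hset : {y : ℤ | m < y ∧ Jm m ρ y = true}
      = insert (m + 1) {y : ℤ | m < y ∧ ρ y = true} := by
    ext y
    simp only [Set.mem_setOf_eq, Set.mem_insert_iff]
    constructor
    · rintro ⟨h1, h2⟩
      by_cases hy : y = m + 1
      · exact Or.inl hy
      · exact Or.inr ⟨h1, by rwa [Jm_apply_ne (by omega) hy] at h2⟩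
    · rintro (rfl | ⟨h1, h2⟩)
      · refine ⟨by omega, ?_⟩
        simp [Jm, h, hne]
      · refine ⟨h1, ?_⟩
        have hy2 : y ≠ m + 1 := by rintro rfl; rw [h.2] at h2; exact absurd h2 (by simp)
        rwa [Jm_apply_ne (by omega) hy2]
  rw [qS, qS, hset, Set.ncard_insert_of_notMem (by simp [h.2]) (qS_finite hρ m)]

lemma qS_succ_of_false {ρ : ℤ → Bool} {m : ℤ} (h : ρ (m + 1) = false) :
    qS ρ (m + 1) = qS ρ m := by
  unfold qS
  congr 1
  ext y
  simp only [Set.mem_setOf_eq]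
  constructor
  · rintro ⟨h1, h2⟩; exact ⟨by omega, h2⟩
  · rintro ⟨h1, h2⟩
    refine ⟨?_, h2⟩
    rcases eq_or_lt_of_le (by omega : m + 1 ≤ y) with rfl | hy
    · rw [h] at h2; exact absurd h2 (by simp)
    · exact hy

lemma qS_succ_of_true {ρ : ℤ → Bool} {m : ℤ} (hρ : BddSupport ρ) (h : ρ (m + 1) = true) :
    qS ρ m = qS ρ (m + 1) + 1 := by
  have hset : {y : ℤ | m < y ∧ ρ y = true}
      = insert (m + 1) {y : ℤ | m + 1 < y ∧ ρ y = true} := by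
    ext y
    simp only [Set.mem_setOf_eq, Set.mem_insert_iff]
    constructor
    · rintro ⟨h1, h2⟩
      rcases eq_or_lt_of_le (by omega : m + 1 ≤ y) with rfl | hy
      · exact Or.inl rfl
      · exact Or.inr ⟨hy, h2⟩
    · rintro (rfl | ⟨h1, h2⟩)
      · exact ⟨by omega, h⟩
      · exact ⟨by omega, h2⟩
  rw [qS, qS, hset, Set.ncard_insert_of_notMem (by simp) (qS_finite hρ (m + 1))]

lemma bddSupport_Rk {ρ : ℤ → Bool} (hρ : BddSupport ρ) (k : ℕ) :
    BddSupport (Rk k ρ) := by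
  obtain ⟨b, hb⟩ := hρ
  refine ⟨b, fun y hy => ?_⟩
  apply hb
  simp only [Set.mem_setOf_eq, Rk] at hy ⊢
  split at hy
  · exact hy
  · exact absurd hy (by simp)

/-- Key commutation: the cut-off commutes with the jump. -/
lemma Rk_Jm_comm {ρ : ℤ → Bool} (hρ : BddSupport ρ) (k : ℕ) (m : ℤ) :
    Rk k (Jm m ρ) = Jm m (Rk k ρ) := by
  by_cases h : ρ m = true ∧ ρ (m + 1) = false
  · have hq1 : qS ρ (m + 1) = qS ρ m := qS_succ_of_false h.2
    by_cases hk : qS ρ m < k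
    · -- the `m`-th particle survives the cut-off, and so does the swap
      have hRm : Rk k ρ m = true := by simp [Rk, hk, h.1]
      have hRm1 : Rk k ρ (m + 1) = false := by simp [Rk, h.2]
      funext x
      rw [show Jm m (Rk k ρ) x =
          if x = m then Rk k ρ (m + 1) else if x = m + 1 then Rk k ρ m else Rk k ρ x by
        simp [Jm, hRm, hRm1]]
      by_cases hx : x = m
      · subst hx
        rw [if_pos rfl, hRm1]
        simp [Rk, Jm, h]
      · rw [if_neg hx]
        by_cases hx1 : x = m + 1
        · rw [hx1, if_pos rfl, hRm]
          have hv : Jm m ρ (m + 1) = true := by simp [Jm, h, show (m+1:ℤ) ≠ m by omega]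
          have hq : qS (Jm m ρ) (m + 1) = qS ρ m := by
            rw [qS_Jm_of_ne (m + 1) (by omega), hq1]
          simp only [Rk, hq, if_pos hk]
          exact hv
        · rw [if_neg hx1]
          have hv : Jm m ρ x = ρ x := Jm_apply_ne hx hx1
          simp [Rk, qS_Jm_of_ne (ρ := ρ) x hx, hv]
    · -- the `m`-th particle is cut off on both sides
      have hRm : Rk k ρ m = false := by simp [Rk, hk]
      have hJR : Jm m (Rk k ρ) = Rk k ρ := Jm_eq_self (by simp [hRm])
      rw [hJR]
      funext x
      by_cases hx : x = m
      · rw [hx]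
        have hv : Jm m ρ m = false := by simp [Jm, h]
        simp [Rk, hv, hRm, hk]
      · by_cases hx1 : x = m + 1
        · rw [hx1]
          have hq : qS (Jm m ρ) (m + 1) = qS ρ (m + 1) := qS_Jm_of_ne _ (by omega)
          have hv : Jm m ρ (m + 1) = ρ m := by simp [Jm, h, show (m+1:ℤ) ≠ m by omega]
          simp only [Rk, hq, hq1]
          rw [if_neg hk, if_neg hk]
        · have hv : Jm m ρ x = ρ x := Jm_apply_ne hx hx1
          simp [Rk, qS_Jm_of_ne (ρ := ρ) x hx, hv]
  · rw [Jm_eq_self h, Jm_eq_self]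
    intro hc
    apply h
    refine ⟨?_, ?_⟩
    · have := hc.1
      simp only [Rk] at this
      split at this
      · exact this
      · exact absurd this (by simp)
    · by_contra hcon
      have hρm1 : ρ (m + 1) = true := by
        cases hval : ρ (m + 1)
        · exact absurd hval hcon
        · rfl
      have hρm : ρ m = true := by
        have := hc.1
        simp only [Rk] at this
        split at this
        · exact this
        · exact absurd this (by simp)
      have hkm : qS ρ m < k := by
        have := hc.1
        simp only [Rk] at this
        split at this
        · assumption
        · exact absurd this (by simp)
      have hstep : qS ρ m = qS ρ (m + 1) + 1 := qS_succ_of_true hρ hρm1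
      have : Rk k ρ (m + 1) = true := by simp [Rk, hρm1]; omega
      rw [hc.2] at this
      exact absurd this (by simp)

/-- If `m ≥ n`, the push-back absorbs the jump. -/
lemma Bn_Jm {τ : ℤ → Bool} (hτ : BddSupport τ) {n m : ℤ} (hm : n ≤ m) :
    Bn n (Jm m τ) = Bn n τ := by
  by_cases h : τ m = true ∧ τ (m + 1) = false
  · funext x
    by_cases hx : n < x
    · simp [Bn, hx]
    · by_cases hxm : x = m
      · rw [hxm]
        rw [hxm] at hx
        have hq : qS (Jm m τ) m = qS τ m + 1 := qS_Jm_self hτ h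
        have hL : Bn n (Jm m τ) m = true := by
          simp only [Bn, if_neg hx, hq]
          rw [if_pos (by push_cast; omega)]
        have hR : Bn n τ m = true := by
          simp only [Bn, if_neg hx]
          split_ifs with h0
          · rfl
          · exact h.1
        rw [hL, hR]
      · have hq : qS (Jm m τ) x = qS τ x := qS_Jm_of_ne x hxm
        have hv : Jm m τ x = τ x := Jm_apply_ne hxm (by omega)
        simp [Bn, hq, hv]
  · rw [Jm_eq_self h]

/-- Lemma 3.2(ii): if `m ≥ n`, then `B_n R_k J_m = B_n R_k`. -/
theorem Bn_Rk_Jm_right (n : ℤ) (k : ℕ) (m : ℤ) (hm : n ≤ m)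
    (ρ : ℤ → Bool) (hρ : BddSupport ρ) :
    Bn n (Rk k (Jm m ρ)) = Bn n (Rk k ρ) := by
  rw [Rk_Jm_comm hρ k m, Bn_Jm (bddSupport_Rk hρ k) hm]
end

section
/- Let n ∈ ℤ, k ≥ 0, and let m be an integer with m ≤ 0. If ρ ∈ Ω₀ is a configuration whose k rightmost particles all lie in [1,∞), i.e. S(ρ, 0) ≥ k, then B_n R_k J_m ρ = B_n R_k ρ. (Lemma 3.2(iii)) -/
open Set

/-!
A jump at `m` only changes the sites `m` and `m + 1`, and `R_k ρ` depends only on `ρ`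
to the right of a site `a` as soon as at least `k` particles lie there. When the jump
does happen, site `m + 1` is empty, so `S(ρ, m + 1) = S(ρ, m) ≥ S(ρ, 0) ≥ k`: the jump is
invisible to `R_k`, hence to `B_n R_k`.
-/

section

variable {ρ σ : ℤ → Bool}

lemma BddSupport.finite_setOf_lt (hρ : BddSupport ρ) (x : ℤ) :
    {y : ℤ | x < y ∧ ρ y = true}.Finite := by
  obtain ⟨B, hB⟩ := hρ
  exact (finite_Ioc x B).subset fun y hy => ⟨hy.1, hB hy.2⟩

lemma qS_antitone (hρ : BddSupport ρ) : Antitone (qS ρ) := fun _ _ hxy =>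
  ncard_le_ncard (fun _ hz => ⟨hxy.trans_lt hz.1, hz.2⟩) (hρ.finite_setOf_lt _)

lemma qS_eq_qS_add_one (x : ℤ) (h : ρ (x + 1) = false) : qS ρ x = qS ρ (x + 1) := by
  unfold qS
  congr 1
  ext y
  refine ⟨fun ⟨hxy, hy⟩ => ⟨?_, hy⟩, fun ⟨hxy, hy⟩ => ⟨by omega, hy⟩⟩
  rcases eq_or_ne y (x + 1) with rfl | _
  · simp [h] at hy
  · omega

lemma qS_congr_of_eqOn_Ioi {a x : ℤ} (h : ∀ y, a < y → σ y = ρ y) (hax : a ≤ x) :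
    qS σ x = qS ρ x := by
  unfold qS
  congr 1
  ext y
  simp only [mem_ofPred_eq]
  exact and_congr_right fun hxy => by rw [h y (hax.trans_lt hxy)]

lemma Rk_apply_of_le {k : ℕ} {x : ℤ} (h : k ≤ qS ρ x) : Rk k ρ x = false := by
  simp [Rk, h.not_gt]

lemma Rk_congr_of_eqOn_Ioi {k : ℕ} {a : ℤ} (hρ : BddSupport ρ) (hσ : BddSupport σ)
    (h : ∀ y, a < y → σ y = ρ y) (hk : k ≤ qS ρ a) : Rk k σ = Rk k ρ := by
  funext x
  rcases lt_or_ge a x with hax | hxa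
  · simp only [Rk, qS_congr_of_eqOn_Ioi h hax.le, h x hax]
  · have hkρ : k ≤ qS ρ x := hk.trans (qS_antitone hρ hxa)
    have hkσ : k ≤ qS σ x := by
      rw [← qS_congr_of_eqOn_Ioi h le_rfl] at hk
      exact hk.trans (qS_antitone hσ hxa)
    rw [Rk_apply_of_le hkρ, Rk_apply_of_le hkσ]

lemma Jm_apply_of_lt {m x : ℤ} (hx : m + 1 < x) : Jm m ρ x = ρ x := by
  simp [Jm, show x ≠ m by omega, show x ≠ m + 1 by omega]

lemma Jm_of_not {m : ℤ} (h : ¬(ρ m = true ∧ ρ (m + 1) = false)) : Jm m ρ = ρ := by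
  funext x
  simp [Jm, h]

lemma BddSupport.Jm (hρ : BddSupport ρ) (m : ℤ) : BddSupport (Jm m ρ) := by
  obtain ⟨B, hB⟩ := hρ
  refine ⟨max B (m + 1), fun y hy => ?_⟩
  rcases le_or_gt y (m + 1) with hy' | hy'
  · exact le_max_of_le_right hy'
  · rw [mem_ofPred_eq, Jm_apply_of_lt hy'] at hy
    exact le_max_of_le_left (hB hy)

lemma Rk_Jm_of_le_qS {k : ℕ} {m : ℤ} (hm : m ≤ 0) (hρ : BddSupport ρ) (hk : k ≤ qS ρ 0) :
    Rk k (Jm m ρ) = Rk k ρ := by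
  by_cases hjump : ρ m = true ∧ ρ (m + 1) = false
  · refine Rk_congr_of_eqOn_Ioi hρ (hρ.Jm m) (fun y => Jm_apply_of_lt) ?_
    calc k ≤ qS ρ 0 := hk
      _ ≤ qS ρ m := qS_antitone hρ hm
      _ = qS ρ (m + 1) := qS_eq_qS_add_one m hjump.2
  · rw [Jm_of_not hjump]

end

/-- Lemma 3.2(iii): if `m ≤ 0` and the `k` rightmost particles of `ρ` all lie in
`[1, ∞)` (i.e. `S(ρ, 0) ≥ k`), then `B_n R_k J_m ρ = B_n R_k ρ`. -/
theorem Bn_Rk_Jm_left (n : ℤ) (k : ℕ) (m : ℤ) (hm : m ≤ 0)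
    (ρ : ℤ → Bool) (hρ : BddSupport ρ) (hk : k ≤ qS ρ 0) :
    Bn n (Rk k (Jm m ρ)) = Bn n (Rk k ρ) := by
  rw [Rk_Jm_of_le_qS hm hρ hk]
end

section
/- Fix y with 0 ≤ y < 1 and s > 0. Then inf{ u ∈ ℝ : ∫_u^∞ h((x−y)/s) dx ≥ max(1−u, 0) } equals 1 if s ≤ 1−y, and equals L_y^+(s) = y − s + 2√(s(1−y)) if s ≥ 1−y. (Explicit formula for the right edge Λ_y^+(s) in the proof of Theorem 4.3) -/
open MeasureTheory

/-- The Rost hydrodynamic density profile `h(x) = min(1, max((1-x)/2, 0))`. -/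
noncomputable def hRost (x : ℝ) : ℝ := min 1 (max ((1 - x) / 2) 0)

/-- `L_y^-(s) = y + s - 2√(sy)`. -/
noncomputable def Lminus (y s : ℝ) : ℝ := y + s - 2 * Real.sqrt (s * y)

/-- `L_y^+(s) = y - s + 2√(s(1-y))`. -/
noncomputable def Lplus (y s : ℝ) : ℝ := y - s + 2 * Real.sqrt (s * (1 - y))

/-- `γ_y = 1 + 2√(y(1-y))`. -/
noncomputable def gamma' (y : ℝ) : ℝ := 1 + 2 * Real.sqrt (y * (1 - y))

/-!
The tail `F(u) = ∫_u^∞ h((x-y)/s) dx` is `y - u` left of `y - s`, the parabola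
`(y+s-u)²/(4s)` on `[y-s, y+s]`, and `0` right of `y + s`. Above `u = 1` the defining
inequality reads `0 ≤ F(u)`, so the set is `[Λ, ∞)` with `Λ ≤ 1` determined by where
`1 - u ≤ F(u)` holds for `u < 1`. If `y + s ≤ 1` the parabola stays below `(1-u)/2`, so this
never happens and `Λ = 1`. Otherwise `(y+s-u)² - 4s(1-u)` factors as
`(u - L_y^+(s))(u - y + s + 2√(s(1-y)))`, whose second factor is positive on `[y-s, y+s]`.
-/

open Set

lemma hRost_nonneg (t : ℝ) : 0 ≤ hRost t :=
  le_min zero_le_one (le_max_right _ _)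

lemma hRost_of_one_le {t : ℝ} (h : 1 ≤ t) : hRost t = 0 := by
  rw [hRost, max_eq_right (by linarith), min_eq_right zero_le_one]

lemma hRost_of_mem_Icc {t : ℝ} (h : t ∈ Icc (-1) 1) : hRost t = (1 - t) / 2 := by
  rw [hRost, max_eq_left (by linarith [h.2]), min_eq_right (by linarith [h.1])]

lemma hRost_of_le_neg_one {t : ℝ} (h : t ≤ -1) : hRost t = 1 := by
  rw [hRost, max_eq_left (by linarith), min_eq_left (by linarith)]

lemma continuous_hRost : Continuous hRost := by
  unfold hRost; fun_prop

lemma sInf_setOf_max_one_sub_le_eq {F : ℝ → ℝ} {a : ℝ} (hF : ∀ u, 0 ≤ F u) (ha : a ≤ 1)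
    (h : ∀ u < 1, 1 - u ≤ F u ↔ a ≤ u) :
    sInf {u : ℝ | max (1 - u) 0 ≤ F u} = a := by
  suffices hset : {u : ℝ | max (1 - u) 0 ≤ F u} = Ici a by rw [hset, csInf_Ici]
  ext u
  rw [mem_ofPred_eq, mem_Ici]
  rcases lt_or_ge u 1 with hu | hu
  · rw [max_eq_left (sub_nonneg.2 hu.le), h u hu]
  · rw [max_eq_right (sub_nonpos.2 hu)]
    exact iff_of_true (hF u) (ha.trans hu)

lemma Lplus_le_one {y s : ℝ} (hs : 0 ≤ s) (hy : y ≤ 1) : Lplus y s ≤ 1 := by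
  have hsq : 1 - Lplus y s = (Real.sqrt s - Real.sqrt (1 - y)) ^ 2 := by
    rw [Lplus, Real.sqrt_mul hs, sub_sq, Real.sq_sqrt hs, Real.sq_sqrt (sub_nonneg.2 hy)]
    ring
  rw [← sub_nonneg, hsq]
  positivity

lemma sq_sub_four_mul_eq_mul_sub_Lplus {y s : ℝ} (hs : 0 ≤ s) (hy : y ≤ 1) (u : ℝ) :
    (y + s - u) ^ 2 - 4 * s * (1 - u)
      = (u - Lplus y s) * (u - y + s + 2 * Real.sqrt (s * (1 - y))) := by
  have hr := Real.sq_sqrt (mul_nonneg hs (sub_nonneg.2 hy))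
  rw [Lplus]
  linear_combination 4 * hr

section Tail

variable {y s : ℝ}

lemma hRost_div_of_le (hs : 0 < s) {x : ℝ} (hx : y + s ≤ x) : hRost ((x - y) / s) = 0 :=
  hRost_of_one_le ((one_le_div hs).2 (by linarith))

lemma integrableOn_Ioi_hRost_div (hs : 0 < s) (v : ℝ) :
    IntegrableOn (fun x => hRost ((x - y) / s)) (Ioi v) := by
  refine IntegrableOn.of_forall_sdiff_eq_zero
    ((continuous_hRost.comp (by fun_prop)).integrableOn_Icc (a := v) (b := y + s))
    measurableSet_Ioi fun _ hx => hRost_div_of_le hs (not_le.1 fun h => hx.2 ⟨hx.1.le, h⟩).le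

lemma integral_Ioi_hRost_div_of_le (hs : 0 < s) {u : ℝ} (hu : y + s ≤ u) :
    ∫ x in Ioi u, hRost ((x - y) / s) = 0 :=
  setIntegral_eq_zero_of_forall_eq_zero fun _ hx => hRost_div_of_le hs (hu.trans (le_of_lt hx))

lemma integral_Ioi_hRost_div_add (hs : 0 < s) (u v : ℝ) :
    (∫ x in u..v, hRost ((x - y) / s)) + ∫ x in Ioi v, hRost ((x - y) / s)
      = ∫ x in Ioi u, hRost ((x - y) / s) :=
  intervalIntegral.integral_interval_add_Ioi (integrableOn_Ioi_hRost_div hs u)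
    (integrableOn_Ioi_hRost_div hs v)

lemma integral_Ioi_hRost_div_of_mem_Icc (hs : 0 < s) {u : ℝ} (hu : u ∈ Icc (y - s) (y + s)) :
    ∫ x in Ioi u, hRost ((x - y) / s) = (y + s - u) ^ 2 / (4 * s) := by
  have hderiv : ∀ x ∈ uIcc u (y + s),
      HasDerivAt (fun x => -(y + s - x) ^ 2 / (4 * s)) (hRost ((x - y) / s)) x := by
    intro x hx
    rw [uIcc_of_le hu.2] at hx
    rw [hRost_of_mem_Icc ⟨(le_div_iff₀ hs).2 (by linarith [hx.1, hu.1]),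
      (div_le_one hs).2 (by linarith [hx.2])⟩]
    refine ((((hasDerivAt_id x).const_sub (y + s)).pow 2).neg.div_const (4 * s)).congr_deriv ?_
    simp only [id]
    field_simp
    ring
  rw [← integral_Ioi_hRost_div_add hs u (y + s), integral_Ioi_hRost_div_of_le hs le_rfl,
    intervalIntegral.integral_eq_sub_of_hasDerivAt hderiv
      ((continuous_hRost.comp (by fun_prop)).intervalIntegrable _ _)]
  ring

lemma integral_Ioi_hRost_div_of_le_sub (hs : 0 < s) {u : ℝ} (hu : u ≤ y - s) :
    ∫ x in Ioi u, hRost ((x - y) / s) = y - u := by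
  have hleft : ∫ x in u..y - s, hRost ((x - y) / s) = ∫ x in u..y - s, (1 : ℝ) :=
    intervalIntegral.integral_congr fun x hx => hRost_of_le_neg_one <| by
      rw [uIcc_of_le hu] at hx
      rw [div_le_iff₀ hs]
      linarith [hx.2]
  rw [← integral_Ioi_hRost_div_add hs u (y - s), hleft,
    integral_Ioi_hRost_div_of_mem_Icc hs ⟨le_rfl, by linarith⟩]
  simp only [intervalIntegral.integral_const, smul_eq_mul, mul_one]
  field_simp
  ring

lemma integral_Ioi_hRost_div_lt_one_sub (hs : 0 < s) (hys : y + s ≤ 1) {u : ℝ}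
    (hu : u < 1) : ∫ x in Ioi u, hRost ((x - y) / s) < 1 - u := by
  rcases le_or_gt (y + s) u with hu₁ | hu₁
  · rw [integral_Ioi_hRost_div_of_le hs hu₁]
    linarith
  rcases le_or_gt (y - s) u with hu₂ | hu₂
  · rw [integral_Ioi_hRost_div_of_mem_Icc hs ⟨hu₂, hu₁.le⟩, div_lt_iff₀ (by positivity)]
    -- `(y+s-u)² ≤ 2s(y+s-u)` since `y + s - u ≤ 2s`, and `y + s - u ≤ 1 - u`
    nlinarith [mul_nonneg (sub_nonneg.2 hu₂) (sub_nonneg.2 hu₁.le)]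
  · rw [integral_Ioi_hRost_div_of_le_sub hs hu₂.le]
    linarith

lemma one_sub_le_integral_Ioi_hRost_div_iff (hs : 0 < s) (hy : y < 1) (hys : 1 ≤ y + s)
    {u : ℝ} (hu : u < 1) :
    1 - u ≤ ∫ x in Ioi u, hRost ((x - y) / s) ↔ Lplus y s ≤ u := by
  have hr : 0 < Real.sqrt (s * (1 - y)) := Real.sqrt_pos.2 (by nlinarith)
  rcases le_or_gt (y - s) u with hu₁ | hu₁
  · rw [integral_Ioi_hRost_div_of_mem_Icc hs ⟨hu₁, by linarith⟩, le_div_iff₀ (by positivity),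
      ← sub_nonneg, mul_comm, sq_sub_four_mul_eq_mul_sub_Lplus hs.le hy.le]
    exact mul_nonneg_iff_of_pos_right (by linarith) |>.trans sub_nonneg
  · rw [integral_Ioi_hRost_div_of_le_sub hs hu₁.le, Lplus]
    exact iff_of_false (by linarith) (by linarith)

end Tail

theorem right_edge_formula_general (y s : ℝ) (hy1 : y < 1) (hs : 0 < s) :
    (s ≤ 1 - y →
      sInf {u : ℝ | max (1 - u) 0 ≤ ∫ x in Set.Ioi u, hRost ((x - y) / s)} = 1)
    ∧ (1 - y ≤ s →
      sInf {u : ℝ | max (1 - u) 0 ≤ ∫ x in Set.Ioi u, hRost ((x - y) / s)}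
        = Lplus y s) := by
  have hF : ∀ u, 0 ≤ ∫ x in Ioi u, hRost ((x - y) / s) := fun u =>
    setIntegral_nonneg measurableSet_Ioi fun x _ => hRost_nonneg _
  refine ⟨fun hsy => sInf_setOf_max_one_sub_le_eq hF le_rfl fun u hu => ?_,
    fun hsy => sInf_setOf_max_one_sub_le_eq hF (Lplus_le_one hs.le hy1.le) fun u hu =>
      one_sub_le_integral_Ioi_hRost_div_iff hs hy1 (by linarith) hu⟩
  exact iff_of_false
    (integral_Ioi_hRost_div_lt_one_sub hs (by linarith) hu).not_ge hu.not_ge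

/-- Explicit formula for the right edge `Λ_y^+(s)` in the proof of Theorem 4.3:
`inf{u : ∫_u^∞ h((x-y)/s) dx ≥ max(1-u, 0)}` equals `1` if `s ≤ 1-y` and `L_y^+(s)`
if `s ≥ 1-y`. -/
theorem right_edge_formula (y s : ℝ) (hy0 : 0 ≤ y) (hy1 : y < 1) (hs : 0 < s) :
    (s ≤ 1 - y →
      sInf {u : ℝ | max (1 - u) 0 ≤ ∫ x in Set.Ioi u, hRost ((x - y) / s)} = 1)
    ∧ (1 - y ≤ s →
      sInf {u : ℝ | max (1 - u) 0 ≤ ∫ x in Set.Ioi u, hRost ((x - y) / s)}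
        = Lplus y s) :=
  right_edge_formula_general y s hy1 hs
end
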